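/- For every field k, the periplectic Brauer algebra A₂ over k is 3-dimensional as a k-vector space; more precisely, the images of 1, s and ε in the quotient form a k-basis of A₂. -/

import Mathlib

/-!
By the relations, products of `1, s, ε` are again `±1, ±s, ±ε` or `0`, so their span is a
subalgebra; it contains the generators, hence is all of `A₂`. For independence, the left
regular action of `A₂` on this span, written as `3 × 3` matrices, does satisfy the relations
and so defines a representation; taking the first column of the matrix of `x` is then a linear
map `A₂ → k³` sending `1, s, ε` to the standard basis vectors.
-/

namespace PeriplecticPaper

/-- The two generators `s` and `ε` of the periplectic Brauer algebra `A₂`. -/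
inductive PBGen : Type
  | s
  | e

open FreeAlgebra

/-- The defining relations of the periplectic Brauer algebra `A₂`:
`s² = 1`, `ε² = 0`, `s·ε = ε` and `ε·s = -ε`.  Taking the ring quotient by this
relation is the quotient of the free algebra on `s, ε` by the two-sided ideal
generated by `s² - 1`, `ε²`, `s·ε - ε` and `ε·s + ε`. -/
inductive A2Rel (k : Type) [Field k] :
    FreeAlgebra k PBGen → FreeAlgebra k PBGen → Prop
  | ss : A2Rel k (ι k PBGen.s * ι k PBGen.s) 1
  | ee : A2Rel k (ι k PBGen.e * ι k PBGen.e) 0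
  | se : A2Rel k (ι k PBGen.s * ι k PBGen.e) (ι k PBGen.e)
  | es : A2Rel k (ι k PBGen.e * ι k PBGen.s) (-(ι k PBGen.e))

/-- The periplectic Brauer algebra `A₂` over the field `k`:  the quotient of the free
associative unital `k`-algebra on generators `s, ε` by the two-sided ideal generated by
`s² - 1`, `ε²`, `s·ε - ε` and `ε·s + ε`. -/
abbrev A2 (k : Type) [Field k] : Type := RingQuot (A2Rel k)

/-- The image in `A₂` of the generator `s`. -/
noncomputable def sBar (k : Type) [Field k] : A2 k :=
  RingQuot.mkAlgHom k (A2Rel k) (ι k PBGen.s)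

/-- The image in `A₂` of the generator `ε`. -/
noncomputable def eBar (k : Type) [Field k] : A2 k :=
  RingQuot.mkAlgHom k (A2Rel k) (ι k PBGen.e)

theorem _root_.RingQuot.subalgebra_eq_top_of_forall_mkAlgHom_ι_mem {R X : Type*} [CommSemiring R]
    {r : FreeAlgebra R X → FreeAlgebra R X → Prop} (S : Subalgebra R (RingQuot r))
    (h : ∀ x, RingQuot.mkAlgHom R r (ι R x) ∈ S) : S = ⊤ := by
  have hle : Algebra.adjoin R (Set.range (ι R)) ≤ S.comap (RingQuot.mkAlgHom R r) :=
    Algebra.adjoin_le (by rintro _ ⟨x, rfl⟩; exact h x)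
  rw [FreeAlgebra.adjoin_range_ι] at hle
  refine eq_top_iff.mpr fun y _ => ?_
  obtain ⟨a, rfl⟩ := RingQuot.mkAlgHom_surjective R r y
  exact hle Algebra.mem_top

variable (k : Type) [Field k]

theorem sBar_mul_sBar : sBar k * sBar k = 1 := by
  simpa [sBar] using RingQuot.mkAlgHom_rel k (A2Rel.ss (k := k))

theorem eBar_mul_eBar : eBar k * eBar k = 0 := by
  simpa [eBar] using RingQuot.mkAlgHom_rel k (A2Rel.ee (k := k))

theorem sBar_mul_eBar : sBar k * eBar k = eBar k := by
  simpa [sBar, eBar] using RingQuot.mkAlgHom_rel k (A2Rel.se (k := k))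

theorem eBar_mul_sBar : eBar k * sBar k = -eBar k := by
  simpa [sBar, eBar] using RingQuot.mkAlgHom_rel k (A2Rel.es (k := k))

noncomputable def basisVec : Fin 3 → A2 k := ![1, sBar k, eBar k]

theorem basisVec_mul_basisVec_mem_span (i j : Fin 3) :
    basisVec k i * basisVec k j ∈ Submodule.span k (Set.range (basisVec k)) := by
  fin_cases i <;> fin_cases j <;>
    simp [basisVec, sBar_mul_sBar, sBar_mul_eBar, eBar_mul_sBar, eBar_mul_eBar] <;>
    exact Submodule.subset_span (by simp)

theorem span_basisVec_eq_top : Submodule.span k (Set.range (basisVec k)) = ⊤ := by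
  set W := Submodule.span k (Set.range (basisVec k))
  have hWW : W * W ≤ W := by
    rw [Submodule.span_mul_span, Submodule.span_le, Set.mul_subset_iff]
    rintro _ ⟨i, rfl⟩ _ ⟨j, rfl⟩
    exact basisVec_mul_basisVec_mem_span k i j
  have hS := RingQuot.subalgebra_eq_top_of_forall_mkAlgHom_ι_mem
    (W.toSubalgebra (Submodule.subset_span ⟨0, rfl⟩)
      fun _ _ hx hy => hWW (Submodule.mul_mem_mul hx hy))
    (by
      rintro (_ | _)
      exacts [(Submodule.subset_span ⟨1, rfl⟩ : sBar k ∈ W),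
        (Submodule.subset_span ⟨2, rfl⟩ : eBar k ∈ W)])
  simpa using congrArg Subalgebra.toSubmodule hS

noncomputable def genMatrix : PBGen → Matrix (Fin 3) (Fin 3) k
  | PBGen.s => !![0, 1, 0; 1, 0, 0; 0, 0, 1]
  | PBGen.e => !![0, 0, 0; 0, 0, 0; 1, -1, 0]

noncomputable def regularRep : A2 k →ₐ[k] Matrix (Fin 3) (Fin 3) k :=
  RingQuot.liftAlgHom k ⟨FreeAlgebra.lift k (genMatrix k), by
    rintro _ _ (_ | _ | _ | _) <;> ext i j <;> fin_cases i <;> fin_cases j <;>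
      simp [genMatrix, Matrix.mul_apply, Fin.sum_univ_three]⟩

noncomputable def coordinates : A2 k →ₗ[k] Fin 3 → k :=
  LinearMap.pi fun i => (Matrix.entryLinearMap k k i 0).comp (regularRep k).toLinearMap

theorem coordinates_basisVec (i : Fin 3) : coordinates k (basisVec k i) = Pi.single i 1 := by
  ext j
  fin_cases i <;> fin_cases j <;>
    simp [coordinates, basisVec, regularRep, sBar, eBar, genMatrix]

theorem linearIndependent_basisVec : LinearIndependent k (basisVec k) := by
  refine LinearIndependent.of_comp (coordinates k) ?_
  convert (Pi.basisFun k (Fin 3)).linearIndependent using 1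
  ext1 i
  simp [coordinates_basisVec]

noncomputable def basis : Module.Basis (Fin 3) k (A2 k) :=
  .mk (linearIndependent_basisVec k) (span_basisVec_eq_top k).ge

/-- For every field `k`, the periplectic Brauer algebra `A₂` over `k` is
`3`-dimensional over `k`; more precisely, the images of `1`, `s` and `ε` in the
quotient form a `k`-basis of `A₂`. -/
theorem statement9 (k : Type) [Field k] :
    Module.finrank k (A2 k) = 3 ∧
    ∃ b : Module.Basis (Fin 3) k (A2 k),
      b 0 = 1 ∧ b 1 = sBar k ∧ b 2 = eBar k := by
  refine ⟨by simp [Module.finrank_eq_card_basis (basis k)], basis k, ?_, ?_, ?_⟩ <;>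
    simp [basis, basisVec]

end PeriplecticPaper
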